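/- arXiv:2102.04322 — 2 statements merged into one kernel-verified Lean document; each statement's English description precedes it below -/
import Mathlib

section
/- Fix μ > 0, 0 < p < 1, and integers m ≥ 1, α ≥ 2. Then ∑_{φ=α}^{mα} [μ/(H_φ − H_{φ−α})] · C(mα, φ) · (1−p)^φ · p^{mα−φ} < μ·m·(1−p). In particular, under the probabilistic access model with exponential service time, the minimal spreading allocation maximizes the service rate over all α quasi-uniform allocations. -/
/-!
`H φ - H (φ - α)` is a sum of `α` reciprocals `1 / i` with `i ≤ φ`, strictly more than `α / φ`
once `α ≥ 2`; hence each summand is below `μ φ / α` times the binomial weight. Summing over all `φ`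
gives `μ / α` times the mean `mα (1 - p)` of the binomial law `Bin(mα, 1 - p)`, i.e. `μ m (1 - p)`.
-/

open Finset
noncomputable def H (n : ℕ) : ℝ := ∑ i ∈ Finset.Icc 1 n, (1 : ℝ) / i

theorem sum_range_mul_choose_mul_pow {R : Type*} [CommSemiring R] (n : ℕ) (x y : R) :
    ∑ k ∈ range (n + 1), (k : R) * n.choose k * x ^ k * y ^ (n - k) = n * x * (x + y) ^ (n - 1) := by
  cases n with
  | zero => simp
  | succ N =>
    rw [sum_range_succ', Nat.cast_zero, zero_mul, zero_mul, zero_mul, add_zero, Nat.add_sub_cancel,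
      add_pow, mul_sum]
    refine sum_congr rfl fun k _ => ?_
    have hchoose : ((k + 1 : ℕ) : R) * (N + 1).choose (k + 1) = (N + 1 : ℕ) * N.choose k := by
      rw [← Nat.cast_mul, ← Nat.cast_mul, mul_comm, Nat.add_one_mul_choose_eq]
    rw [Nat.add_sub_add_right, hchoose]
    ring

theorem H_sub_H_of_le {a b : ℕ} (hab : a ≤ b) : H b - H a = ∑ i ∈ Ioc a b, (1 : ℝ) / i := by
  rw [sub_eq_iff_eq_add', H, H, ← zero_add 1, Icc_add_one_left_eq_Ioc, Icc_add_one_left_eq_Ioc]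
  exact (sum_Ioc_consecutive _ (Nat.zero_le a) hab).symm

theorem div_lt_H_sub_H_sub {α φ : ℕ} (hα : 2 ≤ α) (hφ : α ≤ φ) :
    (α : ℝ) / φ < H φ - H (φ - α) := by
  have hcard : #(Ioc (φ - α) φ) = α := by rw [Nat.card_Ioc]; omega
  calc (α : ℝ) / φ = ∑ _i ∈ Ioc (φ - α) φ, (1 : ℝ) / φ := by
        rw [sum_const, hcard, nsmul_eq_mul, mul_one_div]
    _ < ∑ i ∈ Ioc (φ - α) φ, (1 : ℝ) / i := by
        refine sum_lt_sum (fun i hi => ?_) ⟨φ - α + 1, by simp; omega, ?_⟩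
        · rw [mem_Ioc] at hi
          have : 0 < i := (Nat.zero_le _).trans_lt hi.1
          gcongr
          exact hi.2
        · gcongr
          omega
    _ = H φ - H (φ - α) := (H_sub_H_of_le (Nat.sub_le φ α)).symm

theorem div_H_sub_H_sub_lt {μ : ℝ} (hμ : 0 < μ) {α φ : ℕ} (hα : 2 ≤ α) (hφ : α ≤ φ) :
    μ / (H φ - H (φ - α)) < μ / α * φ := by
  have hφ0 : 0 < φ := by omega
  calc μ / (H φ - H (φ - α)) < μ / (α / φ) :=
        div_lt_div_of_pos_left hμ (by positivity) (div_lt_H_sub_H_sub hα hφ)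
    _ = μ / α * φ := by rw [div_div_eq_mul_div, mul_div_right_comm]

theorem stmt4 (μ p : ℝ) (hμ : 0 < μ) (hp0 : 0 < p) (hp1 : p < 1)
    (m α : ℕ) (hm : 1 ≤ m) (hα : 2 ≤ α) :
    ∑ φ ∈ Finset.Icc α (m * α),
        (μ / (H φ - H (φ - α))) * ((m * α).choose φ) * (1 - p) ^ φ * p ^ (m * α - φ)
      < μ * m * (1 - p) := by
  set n := m * α with hn
  have hq : 0 < 1 - p := sub_pos.2 hp1
  calc ∑ φ ∈ Icc α n, μ / (H φ - H (φ - α)) * n.choose φ * (1 - p) ^ φ * p ^ (n - φ)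
      < ∑ φ ∈ Icc α n, μ / α * (φ * n.choose φ * (1 - p) ^ φ * p ^ (n - φ)) := by
        refine sum_lt_sum_of_nonempty (nonempty_Icc.2 (Nat.le_mul_of_pos_left α hm)) fun φ hφ => ?_
        rw [mem_Icc] at hφ
        have hC : 0 < (n.choose φ : ℝ) := Nat.cast_pos.2 (Nat.choose_pos hφ.2)
        calc _ = μ / (H φ - H (φ - α)) * (n.choose φ * (1 - p) ^ φ * p ^ (n - φ)) := by ring
          _ < μ / α * φ * (n.choose φ * (1 - p) ^ φ * p ^ (n - φ)) := by
            gcongr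
            exact div_H_sub_H_sub_lt hμ hα hφ.1
          _ = _ := by ring
    _ ≤ μ / α * ∑ φ ∈ range (n + 1), φ * n.choose φ * (1 - p) ^ φ * p ^ (n - φ) := by
        rw [← mul_sum]
        gcongr
        exact fun φ hφ => mem_range.2 (Nat.lt_succ_of_le (mem_Icc.1 hφ).2)
    _ = μ * m * (1 - p) := by
        have hα0 : (α : ℝ) ≠ 0 := by positivity
        rw [sum_range_mul_choose_mul_pow, sub_add_cancel, one_pow, mul_one, hn, Nat.cast_mul]
        field_simp
end

section
/- Fix positive integers N, r, m, α with 2 ≤ α ≤ r < N, mα ≤ N, μ > 0. If (mα−α+1)/m ≥ ∏_{i=0}^{α−2} (N−1−i)/(r−1−i), then μ_s(α) = (μα/C(N,r))·∑_{φ=α}^{min(r,mα)} C(mα,φ)C(N−mα,r−φ)/(H_φ−H_{φ−α}) > μmr/N = μ_s(1); i.e., the minimal spreading allocation is not optimal under fixed-size access with scaled exponential service. -/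
open Finset
/-!
The condition on the product forces `N < m r`: otherwise every factor `(N-1-i)/(r-1-i)` exceeds
`N/r ≥ m`, while by Bernoulli `(mα - α + 1)/m ≤ m^(α-1)`.

Since `H_φ - H_{φ-α}` is a sum of `α` terms each at most `1/(φ-α+1)`, every summand of `μ_s(α)`
is at least `μ (φ-α+1)` times its hypergeometric weight. Extending the sum to all `φ ≤ r` only adds
non-positive terms, and the hypergeometric mean `m α r / N` then gives
`μ_s(α) ≥ μ (mαr/N - α + 1) = μ_s(1) + μ (α-1)(mr/N - 1) > μ_s(1)`.
-/

section Harmonic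

lemma H_sub_H_eq_sum_Ioc {a b : ℕ} (h : a ≤ b) : H b - H a = ∑ i ∈ Ioc a b, (1 : ℝ) / i := by
  have hIoc (n : ℕ) : H n = ∑ i ∈ Ioc 0 n, (1 : ℝ) / i := rfl
  rw [hIoc, hIoc, ← sum_Ioc_consecutive _ (Nat.zero_le a) h]
  ring

lemma H_sub_H_sub_pos {n k : ℕ} (hk : 0 < k) (hkn : k ≤ n) : 0 < H n - H (n - k) := by
  rw [H_sub_H_eq_sum_Ioc (Nat.sub_le n k)]
  refine sum_pos (fun i hi => ?_) (nonempty_Ioc.2 (by omega))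
  have : 0 < i := by simp only [mem_Ioc] at hi; omega
  positivity

lemma H_sub_H_sub_le {n k : ℕ} (hkn : k ≤ n) :
    H n - H (n - k) ≤ k / ((n : ℝ) - k + 1) := by
  have hlow : (0 : ℝ) < n - k + 1 := by
    have : (k : ℝ) ≤ n := by exact_mod_cast hkn
    linarith
  rw [H_sub_H_eq_sum_Ioc (Nat.sub_le n k)]
  calc ∑ i ∈ Ioc (n - k) n, (1 : ℝ) / i
      ≤ #(Ioc (n - k) n) • (1 / ((n : ℝ) - k + 1)) := by
        refine sum_le_card_nsmul _ _ _ fun i hi => one_div_le_one_div_of_le hlow ?_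
        have : n - k + 1 ≤ i := by simp only [mem_Ioc] at hi; omega
        have : ((n - k + 1 : ℕ) : ℝ) ≤ i := by exact_mod_cast this
        push_cast [hkn] at this
        exact this
    _ = k / ((n : ℝ) - k + 1) := by
        rw [Nat.card_Ioc, Nat.sub_sub_self hkn, nsmul_eq_mul]
        ring

lemma sub_add_one_div_le_inv_H_sub_H_sub {n k : ℕ} (hk : 0 < k) (hkn : k ≤ n) :
    ((n : ℝ) - k + 1) / k ≤ (H n - H (n - k))⁻¹ := by
  have hlow : (0 : ℝ) < n - k + 1 := by
    have : (k : ℝ) ≤ n := by exact_mod_cast hkn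
    linarith
  rw [le_inv_comm₀ (by positivity) (H_sub_H_sub_pos hk hkn), inv_div]
  exact H_sub_H_sub_le hkn

end Harmonic

section Hypergeometric

lemma sum_range_choose_mul_choose (M K r : ℕ) :
    ∑ φ ∈ range (r + 1), M.choose φ * K.choose (r - φ) = (M + K).choose r := by
  rw [Nat.add_choose_eq, Nat.sum_antidiagonal_eq_sum_range_succ_mk]

lemma add_mul_sum_range_mul_choose_mul_choose (M K r : ℕ) :
    (M + K) * ∑ φ ∈ range (r + 1), φ * (M.choose φ * K.choose (r - φ)) =
      M * r * (M + K).choose r := by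
  rcases M with _ | n
  · rw [zero_mul, zero_mul, sum_eq_zero fun φ _ => by cases φ <;> simp, mul_zero]
  rcases r with _ | s
  · simp
  have hshift (i : ℕ) : (i + 1) * ((n + 1).choose (i + 1) * K.choose (s + 1 - (i + 1))) =
      (n + 1) * (n.choose i * K.choose (s - i)) := by
    rw [Nat.add_sub_add_right, ← mul_assoc, mul_comm (i + 1), ← Nat.add_one_mul_choose_eq,
      mul_assoc]
  rw [sum_range_succ', zero_mul, add_zero]
  simp only [hshift, ← mul_sum, sum_range_choose_mul_choose]
  calc (n + 1 + K) * ((n + 1) * (n + K).choose s)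
      = (n + 1) * ((n + K + 1) * (n + K).choose s) := by ring
    _ = (n + 1) * (s + 1) * (n + 1 + K).choose (s + 1) := by
      rw [Nat.add_one_mul_choose_eq, Nat.add_right_comm]; ring

lemma mul_sum_range_sub_add_one_mul_choose_mul_choose (M K r α : ℕ) :
    ((M + K : ℕ) : ℝ) * ∑ φ ∈ range (r + 1),
        ((φ : ℝ) - α + 1) * ((M.choose φ : ℝ) * (K.choose (r - φ) : ℝ)) =
      ((M : ℝ) * r - ((α : ℝ) - 1) * (M + K : ℕ)) * ((M + K).choose r : ℝ) := by
  have hmean := congrArg (Nat.cast : ℕ → ℝ) (add_mul_sum_range_mul_choose_mul_choose M K r)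
  have hcount := congrArg (Nat.cast : ℕ → ℝ) (sum_range_choose_mul_choose M K r)
  push_cast at hmean hcount ⊢
  simp only [sub_add, sub_mul, sum_sub_distrib, ← mul_sum, hcount, mul_sub, hmean]
  ring

lemma sum_range_le_sum_Icc_sub_add_one_mul_choose_mul_choose (M K r α : ℕ) :
    ∑ φ ∈ range (r + 1), ((φ : ℝ) - α + 1) * ((M.choose φ : ℝ) * (K.choose (r - φ) : ℝ)) ≤
      ∑ φ ∈ Icc α (min r M), ((φ : ℝ) - α + 1) * ((M.choose φ : ℝ) * (K.choose (r - φ) : ℝ)) := by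
  refine sum_le_sum_of_subset_of_nonpos' (fun φ hφ => by simp only [mem_Icc] at hφ; simp; omega)
    fun φ hφr hφ => ?_
  simp only [mem_range, mem_Icc, not_and, not_le] at hφr hφ
  rcases Nat.lt_or_ge φ α with hφα | hαφ
  · have : (φ : ℝ) + 1 ≤ α := by exact_mod_cast hφα
    exact mul_nonpos_of_nonpos_of_nonneg (by linarith) (by positivity)
  · simp [Nat.choose_eq_zero_of_lt (show M < φ by have := hφ hαφ; omega)]

lemma sub_div_le_mul_sum_Icc_div_H_sub_H_sub {M N r α : ℕ} (hα : 0 < α) (hMN : M ≤ N)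
    (hrN : r ≤ N) (hN : 0 < N) :
    ((M : ℝ) * r - ((α : ℝ) - 1) * N) / N ≤
      α / (N.choose r) * ∑ φ ∈ Icc α (min r M),
        (M.choose φ : ℝ) * ((N - M).choose (r - φ) : ℝ) / (H φ - H (φ - α)) := by
  have hchoose : (0 : ℝ) < N.choose r := by exact_mod_cast Nat.choose_pos hrN
  have hidentity := mul_sum_range_sub_add_one_mul_choose_mul_choose M (N - M) r α
  rw [Nat.add_sub_cancel' hMN] at hidentity
  have htermwise : ∑ φ ∈ Icc α (min r M),
        ((φ : ℝ) - α + 1) * ((M.choose φ : ℝ) * ((N - M).choose (r - φ) : ℝ)) ≤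
      α * ∑ φ ∈ Icc α (min r M),
        (M.choose φ : ℝ) * ((N - M).choose (r - φ) : ℝ) / (H φ - H (φ - α)) := by
    rw [mul_sum]
    refine sum_le_sum fun φ hφ => ?_
    have hαφ : α ≤ φ := (mem_Icc.1 hφ).1
    have hbound := sub_add_one_div_le_inv_H_sub_H_sub hα hαφ
    rw [div_le_iff₀ (by positivity)] at hbound
    rw [div_eq_mul_inv]
    calc ((φ : ℝ) - α + 1) * ((M.choose φ : ℝ) * ((N - M).choose (r - φ) : ℝ))
        ≤ (H φ - H (φ - α))⁻¹ * α * ((M.choose φ : ℝ) * ((N - M).choose (r - φ) : ℝ)) :=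
          mul_le_mul_of_nonneg_right hbound (by positivity)
      _ = _ := by ring
  have hN' : (0 : ℝ) < N := by exact_mod_cast hN
  calc ((M : ℝ) * r - ((α : ℝ) - 1) * N) / N
      = (∑ φ ∈ range (r + 1),
          ((φ : ℝ) - α + 1) * ((M.choose φ : ℝ) * ((N - M).choose (r - φ) : ℝ))) / N.choose r := by
        rw [div_eq_div_iff hN'.ne' hchoose.ne']
        linarith
    _ ≤ (α * ∑ φ ∈ Icc α (min r M),
          (M.choose φ : ℝ) * ((N - M).choose (r - φ) : ℝ) / (H φ - H (φ - α))) / N.choose r := by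
        gcongr
        exact (sum_range_le_sum_Icc_sub_add_one_mul_choose_mul_choose M (N - M) r α).trans htermwise
    _ = _ := by ring

end Hypergeometric

lemma div_lt_sub_div_sub {a b x : ℝ} (hx : 0 < x) (hxb : x < b) (hba : b < a) :
    a / b < (a - x) / (b - x) := by
  rw [div_lt_div_iff₀ (by linarith) (by linarith)]
  nlinarith

-- At `x = 0` the left side is the junk value `0 / 0 = 0`.
lemma mul_sub_add_one_div_le_pow_pred {x : ℝ} (hx : 0 ≤ x) {n : ℕ} (hn : 1 ≤ n) :
    (x * n - n + 1) / x ≤ x ^ (n - 1) := by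
  rcases hx.eq_or_lt with rfl | hx
  · rw [div_zero]; exact pow_nonneg le_rfl _
  have hbernoulli := one_add_mul_le_pow (show (-2 : ℝ) ≤ x - 1 by linarith) n
  rw [add_sub_cancel] at hbernoulli
  rw [div_le_iff₀ hx, ← pow_succ, Nat.sub_add_cancel hn]
  linarith

lemma lt_mul_of_prod_le_sub_add_one_div {N r m α : ℕ} (hα : 2 ≤ α) (hαr : α ≤ r) (hrN : r < N)
    (hcond : ((m : ℝ) * α - α + 1) / m ≥
      ∏ i ∈ Finset.range (α - 1), ((N : ℝ) - 1 - i) / ((r : ℝ) - 1 - i)) :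
    N < m * r := by
  by_contra! hmr
  have hr : (0 : ℝ) < r := by exact_mod_cast (by omega : 0 < r)
  have hm_le : (m : ℝ) ≤ N / r := by
    rw [le_div_iff₀ hr]; exact_mod_cast hmr
  have hN : (0 : ℝ) < N := by exact_mod_cast (by omega : 0 < N)
  have hfactor : ∀ i ∈ range (α - 1), (N : ℝ) / r < ((N : ℝ) - 1 - i) / ((r : ℝ) - 1 - i) := by
    intro i hi
    have hir : i + 1 < r := by simp only [mem_range] at hi; omega
    have hir' : 1 + (i : ℝ) < r := by rw [add_comm]; exact_mod_cast hir
    have hrN' : (r : ℝ) < N := by exact_mod_cast hrN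
    simpa only [sub_sub] using div_lt_sub_div_sub (by positivity) hir' hrN'
  have hprod : ((N : ℝ) / r) ^ (α - 1) <
      ∏ i ∈ Finset.range (α - 1), ((N : ℝ) - 1 - i) / ((r : ℝ) - 1 - i) :=
    calc ((N : ℝ) / r) ^ (α - 1) = ∏ _i ∈ range (α - 1), (N : ℝ) / r := by
          rw [prod_const, card_range]
      _ < _ := prod_lt_prod_of_nonempty (fun _ _ => div_pos hN hr) hfactor
          (nonempty_range_iff.2 (by omega))
  linarith [pow_le_pow_left₀ m.cast_nonneg hm_le (α - 1),
    mul_sub_add_one_div_le_pow_pred (m.cast_nonneg : (0 : ℝ) ≤ m) (by omega : 1 ≤ α)]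

theorem stmt11_general (N r m α : ℕ) (hα : 2 ≤ α) (hαr : α ≤ r) (hrN : r < N)
    (hmα : m * α ≤ N) (μ : ℝ) (hμ : 0 < μ)
    (hcond : ((m : ℝ) * α - α + 1) / m ≥
      ∏ i ∈ Finset.range (α - 1), ((N : ℝ) - 1 - i) / ((r : ℝ) - 1 - i)) :
    (μ * α / (N.choose r)) *
      ∑ φ ∈ Finset.Icc α (min r (m * α)),
        ((m * α).choose φ) * ((N - m * α).choose (r - φ)) / (H φ - H (φ - α))
      > μ * m * r / N := by
  have hmr : (N : ℝ) < m * r := by exact_mod_cast lt_mul_of_prod_le_sub_add_one_div hα hαr hrN hcond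
  have hN : (0 : ℝ) < N := by exact_mod_cast (show 0 < N by omega)
  have hα1 : (1 : ℝ) < α := by exact_mod_cast hα
  have hbound :=
    sub_div_le_mul_sum_Icc_div_H_sub_H_sub (α := α) (by omega) hmα hrN.le (by omega : 0 < N)
  push_cast at hbound
  calc μ * m * r / N < μ * ((m * α * r - (α - 1) * N) / N) := by
        rw [← mul_div_assoc, div_lt_div_iff_of_pos_right hN]
        nlinarith [mul_pos hμ (mul_pos (sub_pos.2 hα1) (sub_pos.2 hmr))]
    _ ≤ μ * (α / N.choose r * ∑ φ ∈ Icc α (min r (m * α)),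
          ((m * α).choose φ : ℝ) * ((N - m * α).choose (r - φ) : ℝ) / (H φ - H (φ - α))) :=
        mul_le_mul_of_nonneg_left hbound hμ.le
    _ = _ := by ring

theorem stmt11 (N r m α : ℕ) (hm : 0 < m) (hα : 2 ≤ α) (hαr : α ≤ r) (hrN : r < N)
    (hmα : m * α ≤ N) (μ : ℝ) (hμ : 0 < μ)
    (hcond : ((m : ℝ) * α - α + 1) / m ≥
      ∏ i ∈ Finset.range (α - 1), ((N : ℝ) - 1 - i) / ((r : ℝ) - 1 - i)) :
    (μ * α / (N.choose r)) *
      ∑ φ ∈ Finset.Icc α (min r (m * α)),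
        ((m * α).choose φ) * ((N - m * α).choose (r - φ)) / (H φ - H (φ - α))
      > μ * m * r / N :=
  stmt11_general N r m α hα hαr hrN hmα μ hμ hcond
end
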